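/- arXiv:gr-qc/0507062 — 7 statements merged into one kernel-verified Lean document; each statement's English description precedes it below -/
import Mathlib

section
/- Suppose the flux-matching condition holds. If M₁ + M₂ ≠ 0, then λ = 0, ω = 0, M₁ = M₂ and Q₁ = Q₂. (This is the key algebraic step showing that the freedom in the Cauchy boundary data generated by the gauge constants λ and ω is completely fixed for positive-mass exteriors.) -/
open Complex ComplexConjugate

/-- The flux-matching condition: for all real values of the eight parameters
`c_e, c_d, c_s, c_p, ch₁, ch₂, ca₁, ca₂`, the boundary/infinity flux identity
`4 M₁ c_d + 2 Q₁ (ch₁ + ca₁ + ch₂ + ca₂) = 4 M₂ ĉ_d + 2 Q₂ (ĉh₁ + ĉa₁ + ĉh₂ + ĉa₂)`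
holds, where the hatted constants are the gauge-transformed ones (by `λ` and `ω`). -/
def FluxMatching (M₁ M₂ Q₁ Q₂ ω : ℝ) (lam : ℂ) : Prop :=
  ∀ c_e c_d c_s c_p ch₁ ch₂ ca₁ ca₂ : ℝ,
    let cp : ℂ := (c_p : ℂ)
    let ca₁' : ℂ := ca₁ + 2 * I * c_p * lam
    let ca₂' : ℂ := ca₂ - 2 * I * c_p * conj lam
    let cd' : ℂ := c_d + ca₁ * conj lam + ca₂ * lam + 2 * c_p * ω
    let cs' : ℂ := c_s + 3 * I * (ca₁ * conj lam - ca₂ * lam) - 6 * c_p * lam * conj lam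
    let ch₁' : ℂ := ch₁ + (c_d + I * c_s) * lam - ca₁ * (lam * conj lam + I * ω)
      + 2 * lam ^ 2 * (ca₂ - I * c_p * conj lam) + 2 * c_p * lam * ω
    let ch₂' : ℂ := ch₂ + (c_d - I * c_s) * conj lam - ca₂ * (lam * conj lam - I * ω)
      + 2 * (conj lam) ^ 2 * (ca₁ + I * c_p * lam) + 2 * c_p * conj lam * ω
    (4 * (M₁ : ℂ) * c_d + 2 * (Q₁ : ℂ) * (ch₁ + ca₁ + ch₂ + ca₂) : ℂ)
      = 4 * (M₂ : ℂ) * cd' + 2 * (Q₂ : ℂ) * (ch₁' + ca₁' + ch₂' + ca₂')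

/-- If the flux-matching condition holds and `M₁ + M₂ ≠ 0`, then the gauge constants
vanish, `λ = 0` and `ω = 0`, and consequently `M₁ = M₂` and `Q₁ = Q₂`. -/
theorem fluxMatching_gauge_fixing (M₁ M₂ Q₁ Q₂ ω : ℝ) (lam : ℂ)
    (h : FluxMatching M₁ M₂ Q₁ Q₂ ω lam) (hM : M₁ + M₂ ≠ 0) :
    lam = 0 ∧ ω = 0 ∧ M₁ = M₂ ∧ Q₁ = Q₂ := by
  have hQ := h 0 0 0 0 1 0 0 0
  simp only [Complex.ofReal_zero, Complex.ofReal_one, Complex.ext_iff] at hQ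
  norm_num at hQ
  have hd := h 0 1 0 0 0 0 0 0
  have ha1 := h 0 0 0 0 0 0 1 0
  have hs := h 0 0 1 0 0 0 0 0
  have hp := h 0 0 0 1 0 0 0 0
  simp only [Complex.ofReal_zero, Complex.ofReal_one, Complex.ext_iff] at hd ha1 hs hp
  norm_num [Complex.add_re, Complex.mul_re, Complex.mul_im, Complex.sub_re, Complex.sub_im,
    Complex.add_im, pow_two] at hd ha1 hs hp
  rw [hQ] at ha1
  have hCy : Q₂ * lam.im = 0 := by rcases hs with h | h <;> simp [h]
  have hx : lam.re = 0 := by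
    have key : lam.re * (M₁ + M₂) = 0 := by
      linear_combination (lam.re / 4) * hd - (1/2) * ha1.1 + 3 * lam.im * hCy
    rcases mul_eq_zero.mp key with h | h
    · exact h
    · exact absurd h hM
  have hMM : M₁ = M₂ := by linear_combination (1/4) * hd + Q₂ * hx
  have hM2 : M₂ ≠ 0 := by
    intro h0; apply hM; rw [hMM, h0]; ring
  have hω : ω = 0 := by
    have key : 8 * M₂ * ω = 0 := by
      linear_combination -hp.1 - (8 * Q₂ * ω + 8 * Q₂ * lam.re * lam.im) * hx
        - (8 * lam.im * lam.im - 8) * hCy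
    have := mul_eq_zero.mp key
    rcases this with h | h
    · exact absurd (by rcases mul_eq_zero.mp h with h' | h' <;> [norm_num at h'; exact h']) hM2
    · exact h
  have hy : lam.im = 0 := by
    have key : 4 * M₂ * lam.im = 0 := by
      linear_combination ha1.2 - (8 * Q₂ * lam.im) * hx - 2 * Q₂ * hω
    rcases mul_eq_zero.mp key with h | h
    · exact absurd (by rcases mul_eq_zero.mp h with h' | h' <;> [norm_num at h'; exact h']) hM2
    · exact h
  exact ⟨Complex.ext hx hy, hω, hMM, hQ⟩
end

section
/- If the flux-matching condition holds, then Q₂ * (conj(λ) - λ) = 0; that is, if Q₂ ≠ 0 then λ is real (obtained by choosing c_s = 1 and all other parameters zero). -/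
open Complex ComplexConjugate

/-- If the flux-matching condition holds, then `Q₂ (conj λ - λ) = 0`; that is,
if `Q₂ ≠ 0` then `λ` is real (obtained by choosing `c_s = 1`, the rest zero). -/
theorem fluxMatching_lambda_real (M₁ M₂ Q₁ Q₂ ω : ℝ) (lam : ℂ)
    (h : FluxMatching M₁ M₂ Q₁ Q₂ ω lam) :
    (Q₂ : ℂ) * (conj lam - lam) = 0 := by
  have hcs : (2 * Q₂ * I * (lam - conj lam) : ℂ) = 0 := by
    have hflux := h 0 0 1 0 0 0 0 0
    simp only [ofReal_zero, ofReal_one] at hflux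
    linear_combination -hflux
  linear_combination (I / 2) * hcs + Q₂ * (conj lam - lam) * I_sq
end

section
/- If the flux-matching condition holds, then 2*λ*conj(λ)*(M₁ + M₂) = I*Q₂*ω*(λ + conj(λ)) as complex numbers; in particular, taking real parts, λ*conj(λ)*(M₁ + M₂) = 0. -/
open Complex ComplexConjugate

/-- If the flux-matching condition holds, then
`2 λ conj(λ) (M₁ + M₂) = I Q₂ ω (λ + conj λ)`; in particular, taking real parts,
`λ conj(λ) (M₁ + M₂) = 0`. -/
theorem fluxMatching_lambda_mass (M₁ M₂ Q₁ Q₂ ω : ℝ) (lam : ℂ)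
    (h : FluxMatching M₁ M₂ Q₁ Q₂ ω lam) :
    2 * lam * conj lam * ((M₁ : ℂ) + M₂) = I * Q₂ * ω * (lam + conj lam) ∧
      lam * conj lam * ((M₁ : ℂ) + M₂) = 0 := by

  have h1 := h 0 1 0 0 0 0 0 0
  have h2 := h 0 0 1 0 0 0 0 0
  have h6 := h 0 0 0 0 1 0 0 0
  have h3 := h 0 0 0 0 0 0 1 0
  have h4 := h 0 0 0 0 0 0 0 1
  simp only [Complex.ofReal_zero, Complex.ofReal_one] at h1 h2 h6 h3 h4
  have hI : I ^ 2 = -1 := Complex.I_sq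
  have hA : (Q₂ : ℂ) * (lam - conj lam) = 0 := by
    linear_combination (I/2) * h2 + ((Q₂ : ℂ) * (lam - conj lam)) * hI
  have key1 : lam * conj lam * ((M₁ : ℂ) + M₂) = 0 := by
    linear_combination (lam * conj lam / 4) * h1 - (lam / 4) * h3 - (conj lam / 4) * h4
      + ((lam + conj lam) / 4) * h6 + (I * ω / 2) * hA
  have key2 : I * (Q₂ : ℂ) * ω * (lam + conj lam) = 0 := by
    rcases mul_eq_zero.mp hA with hq | hl
    · rw [hq]; ring
    · have hc : (starRingEnd ℂ) lam = lam := (sub_eq_zero.mp hl).symm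
      rw [hc] at h3 h4
      have hq2 : I * (Q₂ : ℂ) * ω = 0 := by
        linear_combination (1/4) * (h3 - h4)
      linear_combination (lam + conj lam) * hq2
  exact ⟨by linear_combination 2 * key1 - key2, key1⟩
end

section
/- If the flux-matching condition holds, then 2*ω*(M₁ + M₂) = -ω*Q₂*(λ + conj(λ)) as complex numbers. -/
open Complex ComplexConjugate

/-- If the flux-matching condition holds, then
`2 ω (M₁ + M₂) = -ω Q₂ (λ + conj λ)` as complex numbers. -/
theorem fluxMatching_omega_mass (M₁ M₂ Q₁ Q₂ ω : ℝ) (lam : ℂ)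
    (h : FluxMatching M₁ M₂ Q₁ Q₂ ω lam) :
    2 * (ω : ℂ) * ((M₁ : ℂ) + M₂) = -(ω : ℂ) * Q₂ * (lam + conj lam) := by
  have h1 := h 0 1 0 0 0 0 0 0
  have h2 := h 0 0 0 1 0 0 0 0
  have h5 := h 0 0 1 0 0 0 0 0
  simp only [Real.cos] at h1 h2 h5
  push_cast at h1 h2 h5
  linear_combination ((ω:ℂ)/2) * h1 - (1/2 : ℂ) * h2 + (1 - lam * conj lam) * h5
end

section
/- The case M₁ + M₂ = 0 does not force the gauge constants to vanish: if M and Q are nonzero real numbers and one sets M₁ := M, M₂ := -M, Q₁ := Q, Q₂ := Q, ω := 0, and λ := (2*M/Q : ℂ), then the flux-matching condition holds (for all real values of the eight parameters). -/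
open Complex ComplexConjugate

/-- The case `M₁ + M₂ = 0` does not force the gauge constants to vanish: for
nonzero reals `M` and `Q`, taking `M₁ = M`, `M₂ = -M`, `Q₁ = Q₂ = Q`, `ω = 0`
and `λ = 2M/Q`, the flux-matching condition holds. -/
theorem fluxMatching_zero_total_mass_counterexample (M Q : ℝ) (hM : M ≠ 0) (hQ : Q ≠ 0) :
    FluxMatching M (-M) Q Q 0 ((2 * M / Q : ℝ) : ℂ) := by
  intro c_e c_d c_s c_p ch₁ ch₂ ca₁ ca₂
  simp only [Complex.conj_ofReal, Complex.ofReal_zero]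
  have hQ' : (Q : ℂ) ≠ 0 := Complex.ofReal_ne_zero.mpr hQ
  have h : (Q : ℂ) * ((2 * M / Q : ℝ) : ℂ) = 2 * M := by
    push_cast
    field_simp
  push_cast
  push_cast at h
  linear_combination (-2 * (2 * (c_d : ℂ) + ((ca₁ : ℂ) + ca₂) * ((2 * M / Q : ℂ)))) * h
end

section
/- Mazur identity (flat two-dimensional form with weight ρ): let U ⊆ ℝ × ℝ be open with first coordinate ρ(x) := x.1 positive on U, and let Φ₁, Φ₂ : ℝ × ℝ → Matrix (Fin 3) (Fin 3) ℂ be twice continuously differentiable on U, taking Hermitian positive definite values at every point of U. Write ∂₁, ∂₂ for the partial derivatives along the two coordinate directions and 𝒥ₖᵢ := Φₖ⁻¹ * ∂ᵢΦₖ. If for k = 1, 2 one has ∂₁(ρ * 𝒥ₖ₁) + ∂₂(ρ * 𝒥ₖ₂) = 0 at every point of U (a matrix-valued equation, with ρ * 𝒥ₖᵢ meaning entrywise multiplication by the scalar function ρ), then at every point of U: ∂₁( ρ * ∂₁(trace(Φ₁ * Φ₂⁻¹)) ) + ∂₂( ρ * ∂₂(trace(Φ₁ * Φ₂⁻¹))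 ) = ρ * ( trace(𝒥̲₁ᴴ * Φ₁ * 𝒥̲₁ * Φ₂⁻¹) + trace(𝒥̲₂ᴴ * Φ₁ * 𝒥̲₂ * Φ₂⁻¹) ), where 𝒥̲ᵢ := 𝒥₁ᵢ - 𝒥₂ᵢ and ᴴ denotes conjugate transpose; in particular the right-hand side has nonnegative real part. -/
open Matrix
open scoped ComplexOrder

attribute [local instance] Matrix.normedAddCommGroup Matrix.normedSpace

/-- Partial derivative along the first coordinate direction of `ℝ × ℝ`. -/
noncomputable def pd1 {F : Type*} [NormedAddCommGroup F] [NormedSpace ℝ F]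
    (f : ℝ × ℝ → F) (x : ℝ × ℝ) : F :=
  fderiv ℝ f x (1, 0)

/-- Partial derivative along the second coordinate direction of `ℝ × ℝ`. -/
noncomputable def pd2 {F : Type*} [NormedAddCommGroup F] [NormedSpace ℝ F]
    (f : ℝ × ℝ → F) (x : ℝ × ℝ) : F :=
  fderiv ℝ f x (0, 1)

noncomputable section MazurAux
namespace MazurAux

abbrev MM := Matrix (Fin 3) (Fin 3) ℂ

noncomputable def mulCLM : MM →L[ℝ] MM →L[ℝ] MM :=
  LinearMap.toContinuousLinearMap <|
    { toFun := fun a => LinearMap.toContinuousLinearMap ((LinearMap.mul ℝ MM) a)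
      map_add' := by intro a b; ext c; simp [add_mul]
      map_smul' := by intro r a; ext c; simp }

@[simp] lemma mulCLM_apply (a b : MM) : mulCLM a b = a * b := rfl

noncomputable def traceCLM : MM →L[ℝ] ℂ :=
  LinearMap.toContinuousLinearMap
    { toFun := fun A => A.trace
      map_add' := by intro a b; simp
      map_smul' := by intro r a; simp [Matrix.trace_smul] }

@[simp] lemma traceCLM_apply (A : MM) : traceCLM A = A.trace := rfl

noncomputable def ctCLM : MM →L[ℝ] MM :=
  LinearMap.toContinuousLinearMap
    { toFun := fun A => Aᴴ
      map_add' := by intro a b; simp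
      map_smul' := by
        intro r a
        ext i j
        simp [Matrix.conjTranspose_apply, Complex.real_smul] }

@[simp] lemma ctCLM_apply (A : MM) : ctCLM A = Aᴴ := rfl

variable {n : WithTop ℕ∞}
variable {E : Type*} [NormedAddCommGroup E] [NormedSpace ℝ E]
variable {f g h Φ : E → MM} {f' g' : E →L[ℝ] MM} {x y : E}

theorem hasFDerivAt_matmul (hf : HasFDerivAt f f' x) (hg : HasFDerivAt g g' x) :
    HasFDerivAt (fun y => f y * g y)
      (mulCLM.precompR E (f x) g' + mulCLM.precompL E f' (g x)) x :=
  mulCLM.hasFDerivAt_of_bilinear hf hg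

theorem differentiableAt_matmul (hf : DifferentiableAt ℝ f x) (hg : DifferentiableAt ℝ g x) :
    DifferentiableAt ℝ (fun y => f y * g y) x :=
  (hasFDerivAt_matmul hf.hasFDerivAt hg.hasFDerivAt).differentiableAt

theorem fderiv_matmul (hf : DifferentiableAt ℝ f x) (hg : DifferentiableAt ℝ g x) (v : E) :
    fderiv ℝ (fun y => f y * g y) x v
      = fderiv ℝ f x v * g x + f x * fderiv ℝ g x v := by
  erw [(hasFDerivAt_matmul hf.hasFDerivAt hg.hasFDerivAt).fderiv]
  exact add_comm _ _

theorem contDiff_matrix (f : E → MM) (h : ∀ i j, ContDiff ℝ n fun e => f e i j) :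
    ContDiff ℝ n f :=
  contDiff_pi.mpr fun i => contDiff_pi.mpr fun j => h i j

theorem contDiff_entry (i j : Fin 3) : ContDiff ℝ n (fun A : MM => A i j) :=
  contDiff_pi.mp ((contDiff_pi.mp contDiff_id) i) j

theorem contDiff_det : ContDiff ℝ n (fun A : MM => A.det) := by
  simp only [Matrix.det_apply, Units.smul_def, zsmul_eq_mul]
  apply ContDiff.sum
  intro σ _
  have hp : ContDiff ℝ n (fun A : MM => ∏ i, A (σ i) i) := by
    classical
    induction (Finset.univ : Finset (Fin 3)) using Finset.cons_induction with
    | empty => simpa using contDiff_const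
    | cons a s ha ih =>
        simp only [Finset.prod_cons]
        exact (contDiff_entry (σ a) a).mul ih
  exact contDiff_const.mul hp

theorem contDiff_adjugate : ContDiff ℝ n (fun A : MM => A.adjugate) := by
  apply contDiff_matrix
  intro i j
  simp only [Matrix.adjugate_apply]
  exact contDiff_det.comp <| contDiff_matrix _ fun k l => by
    by_cases hk : k = j
    · subst hk; simp only [Matrix.updateRow_self]; exact contDiff_const
    · simp only [Matrix.updateRow_apply, hk, if_false]; exact contDiff_entry k l

lemma inv_eq_det_smul (A : MM) : A⁻¹ = (A.det)⁻¹ • A.adjugate := by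
  rw [Matrix.inv_def, Ring.inverse_eq_inv']

theorem differentiableAt_matinv (hΦ : DifferentiableAt ℝ Φ y)
    (hdet : (Φ y).det ≠ 0) : DifferentiableAt ℝ (fun z => (Φ z)⁻¹) y := by
  simp only [inv_eq_det_smul]
  have hd : DifferentiableAt ℝ (fun z => (Φ z).det) y :=
    ((contDiff_det (n := 1)).differentiable one_ne_zero _).comp y hΦ
  have ha : DifferentiableAt ℝ (fun z => (Φ z).adjugate) y :=
    ((contDiff_adjugate (n := 1)).differentiable one_ne_zero _).comp y hΦ
  exact (hd.inv hdet).smul ha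

theorem fderiv_matinv (hΦ : DifferentiableAt ℝ Φ y) (hdet : (Φ y).det ≠ 0) (v : E) :
    fderiv ℝ (fun z => (Φ z)⁻¹) y v = -((Φ y)⁻¹ * fderiv ℝ Φ y v * (Φ y)⁻¹) := by
  have hinv : DifferentiableAt ℝ (fun z => (Φ z)⁻¹) y := differentiableAt_matinv hΦ hdet
  have hc : ContinuousAt (fun z => (Φ z).det) y :=
    (((contDiff_det (n := 1)).differentiable one_ne_zero _).comp y hΦ).continuousAt
  have hev : (fun z => Φ z * (Φ z)⁻¹) =ᶠ[nhds y] (fun _ => (1 : MM)) := by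
    filter_upwards [hc.eventually_ne hdet] with z hz
    exact Matrix.mul_nonsing_inv _ (isUnit_iff_ne_zero.mpr hz)
  have h0 : fderiv ℝ (fun z => Φ z * (Φ z)⁻¹) y v = 0 := by
    rw [hev.fderiv_eq, fderiv_fun_const]
    simp
  rw [fderiv_matmul hΦ hinv v] at h0
  have h1 : (Φ y)⁻¹ * (fderiv ℝ Φ y v * (Φ y)⁻¹ + Φ y * fderiv ℝ (fun z => (Φ z)⁻¹) y v)
      = 0 := by rw [h0, mul_zero]
  rw [mul_add, ← mul_assoc (Φ y)⁻¹ (Φ y), Matrix.nonsing_inv_mul _ (isUnit_iff_ne_zero.mpr hdet),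
    one_mul, ← mul_assoc] at h1
  exact eq_neg_of_add_eq_zero_right h1

theorem fderiv_trace (hf : DifferentiableAt ℝ f y) (v : E) :
    fderiv ℝ (fun z => (f z).trace) y v = (fderiv ℝ f y v).trace := by
  have h2 : HasFDerivAt (fun z => (f z).trace) (traceCLM.comp (fderiv ℝ f y)) y :=
    traceCLM.hasFDerivAt.comp y hf.hasFDerivAt
  rw [h2.fderiv]; rfl

theorem fderiv_ct (hf : DifferentiableAt ℝ f y) (v : E) :
    fderiv ℝ (fun z => (f z)ᴴ) y v = (fderiv ℝ f y v)ᴴ := by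
  have h2 : HasFDerivAt (fun z => (f z)ᴴ) (ctCLM.comp (fderiv ℝ f y)) y :=
    ctCLM.hasFDerivAt.comp y hf.hasFDerivAt
  rw [h2.fderiv]; rfl

theorem fderiv_trace_mul3 (hf : DifferentiableAt ℝ f x) (hg : DifferentiableAt ℝ g x)
    (hh : DifferentiableAt ℝ h x) (v : E) :
    fderiv ℝ (fun y => (f y * g y * h y).trace) x v
      = (fderiv ℝ f x v * g x * h x).trace + (f x * fderiv ℝ g x v * h x).trace
        + (f x * g x * fderiv ℝ h x v).trace := by
  have hfg : DifferentiableAt ℝ (fun y => f y * g y) x := differentiableAt_matmul hf hg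
  rw [fderiv_trace (differentiableAt_matmul hfg hh) v,
    fderiv_matmul hfg hh v, fderiv_matmul hf hg v]
  simp only [Matrix.add_mul, Matrix.trace_add, Matrix.mul_assoc]

theorem trace_nonneg_of_psd {M : MM} (h : M.PosSemidef) : 0 ≤ M.trace := by
  have hd : ∀ i, 0 ≤ M i i := by
    intro i
    exact h.diag_nonneg
  have : M.trace = ∑ i, M i i := rfl
  rw [this]
  exact Finset.sum_nonneg fun i _ => hd i

open scoped MatrixOrder in
theorem trace_mul_psd_nonneg {M N : MM} (hM : M.PosSemidef) (hN : N.PosSemidef) :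
    0 ≤ (M * N).trace := by
  have hs : (CFC.sqrt N).PosSemidef := (CFC.sqrt_nonneg N).posSemidef
  have hherm : (CFC.sqrt N)ᴴ = CFC.sqrt N := hs.1
  have key : (M * N).trace = ((CFC.sqrt N)ᴴ * M * CFC.sqrt N).trace := by
    conv_lhs => rw [← CFC.sqrt_mul_sqrt_self N hN.nonneg]
    rw [hherm, ← Matrix.mul_assoc, Matrix.trace_mul_comm (M * CFC.sqrt N) (CFC.sqrt N),
      ← Matrix.mul_assoc]
  rw [key]
  exact trace_nonneg_of_psd (hM.conjTranspose_mul_mul_same _)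

theorem point_identity (c : ℂ) (P S D1 D2 J : MM)
    (hP : Pᴴ = P) (hS : Sᴴ = S) (hD1 : D1ᴴ = D1) (hD2 : D2ᴴ = D2)
    (hPd : P.det ≠ 0) (hSd : S.det ≠ 0)
    (hJ : J = P⁻¹ * D1 - S⁻¹ * D2) :
    (D1 * (c • J) * S⁻¹).trace + (P * (c • J) * -(S⁻¹ * D2 * S⁻¹)).trace
      = c * (Jᴴ * P * J * S⁻¹).trace := by
  have hPu : IsUnit P.det := isUnit_iff_ne_zero.mpr hPd
  have hJH : Jᴴ = D1 * P⁻¹ - D2 * S⁻¹ := by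
    subst hJ
    rw [conjTranspose_sub, conjTranspose_mul, conjTranspose_mul,
      Matrix.conjTranspose_nonsing_inv, Matrix.conjTranspose_nonsing_inv, hP, hS, hD1, hD2]
  have hD1P : D1 * P⁻¹ * P = D1 := by
    rw [Matrix.mul_assoc, Matrix.nonsing_inv_mul _ hPu, Matrix.mul_one]
  have expand : Jᴴ * P * J * S⁻¹ = D1 * J * S⁻¹ - D2 * S⁻¹ * P * J * S⁻¹ := by
    rw [hJH, Matrix.sub_mul, hD1P, Matrix.sub_mul, Matrix.sub_mul]
  have cyc : (P * J * (S⁻¹ * D2 * S⁻¹)).trace = (D2 * S⁻¹ * P * J * S⁻¹).trace := by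
    calc (P * J * (S⁻¹ * D2 * S⁻¹)).trace
        = ((S⁻¹ * D2 * S⁻¹) * (P * J)).trace := Matrix.trace_mul_comm _ _
      _ = ((S⁻¹ * D2) * (S⁻¹ * (P * J))).trace := by rw [Matrix.mul_assoc]
      _ = ((S⁻¹ * (P * J)) * (S⁻¹ * D2)).trace := Matrix.trace_mul_comm _ _
      _ = ((S⁻¹ * (P * J) * S⁻¹) * D2).trace := by
          congr 1
          simp only [Matrix.mul_assoc]
      _ = (D2 * (S⁻¹ * (P * J) * S⁻¹)).trace := Matrix.trace_mul_comm _ _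
      _ = (D2 * S⁻¹ * P * J * S⁻¹).trace := by
          congr 1
          simp only [Matrix.mul_assoc]
  rw [expand]
  have lhs2 : (P * (c • J) * -(S⁻¹ * D2 * S⁻¹)).trace
      = -(c * (P * J * (S⁻¹ * D2 * S⁻¹)).trace) := by
    simp only [mul_neg, Matrix.trace_neg, Matrix.mul_smul, Matrix.smul_mul,
      Matrix.trace_smul, smul_eq_mul]
  have lhs1 : (D1 * (c • J) * S⁻¹).trace = c * (D1 * J * S⁻¹).trace := by
    simp only [Matrix.mul_smul, Matrix.smul_mul, Matrix.trace_smul, smul_eq_mul]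
  rw [lhs1, lhs2, cyc, Matrix.trace_sub]
  ring

theorem inner_eq {Φ₁ Φ₂ : E → MM} {y : E}
    (h1 : DifferentiableAt ℝ Φ₁ y) (h2 : DifferentiableAt ℝ Φ₂ y)
    (hd1 : (Φ₁ y).det ≠ 0) (hd2 : (Φ₂ y).det ≠ 0) (v : E) (c : ℂ) :
    c * fderiv ℝ (fun z => (Φ₁ z * (Φ₂ z)⁻¹).trace) y v
      = (Φ₁ y * (c • ((Φ₁ y)⁻¹ * fderiv ℝ Φ₁ y v) - c • ((Φ₂ y)⁻¹ * fderiv ℝ Φ₂ y v))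
          * (Φ₂ y)⁻¹).trace := by
  have hΨ : DifferentiableAt ℝ (fun z => (Φ₂ z)⁻¹) y := differentiableAt_matinv h2 hd2
  rw [fderiv_trace (differentiableAt_matmul h1 hΨ) v, fderiv_matmul h1 hΨ v,
    fderiv_matinv h2 hd2 v]
  have k1 : Φ₁ y * (c • ((Φ₁ y)⁻¹ * fderiv ℝ Φ₁ y v)) = c • fderiv ℝ Φ₁ y v := by
    rw [Matrix.mul_smul, ← Matrix.mul_assoc,
      Matrix.mul_nonsing_inv _ (isUnit_iff_ne_zero.mpr hd1), Matrix.one_mul]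
  rw [Matrix.mul_sub, k1, Matrix.sub_mul]
  simp only [Matrix.trace_add, Matrix.trace_sub, Matrix.smul_mul, Matrix.mul_smul,
    Matrix.trace_smul, smul_eq_mul, mul_neg, Matrix.trace_neg, Matrix.mul_assoc]
  ring

theorem point_identity' (c : ℂ) (P S D1 D2 : MM)
    (hP : Pᴴ = P) (hS : Sᴴ = S) (hD1 : D1ᴴ = D1) (hD2 : D2ᴴ = D2)
    (hPd : P.det ≠ 0) (hSd : S.det ≠ 0) :
    (D1 * (c • (P⁻¹ * D1) - c • (S⁻¹ * D2)) * S⁻¹).trace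
      + (P * (c • (P⁻¹ * D1) - c • (S⁻¹ * D2)) * -(S⁻¹ * D2 * S⁻¹)).trace
      = c * ((P⁻¹ * D1 - S⁻¹ * D2)ᴴ * P * (P⁻¹ * D1 - S⁻¹ * D2) * S⁻¹).trace := by
  rw [← smul_sub]
  exact point_identity c P S D1 D2 _ hP hS hD1 hD2 hPd hSd rfl

end MazurAux


open MazurAux

/-- Mazur identity (flat two-dimensional form with weight `ρ(x) = x.1`): if
`Φ₁, Φ₂` are `C²` on the open set `U`, pointwise Hermitian positive definite,
and the currents `𝒥ₖᵢ = Φₖ⁻¹ ∂ᵢΦₖ` satisfy `∂₁(ρ 𝒥ₖ₁) + ∂₂(ρ 𝒥ₖ₂) = 0` on `U`,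
then on `U`
`∂₁(ρ ∂₁ tr(Φ₁ Φ₂⁻¹)) + ∂₂(ρ ∂₂ tr(Φ₁ Φ₂⁻¹))
  = ρ ( tr(𝒥̲₁ᴴ Φ₁ 𝒥̲₁ Φ₂⁻¹) + tr(𝒥̲₂ᴴ Φ₁ 𝒥̲₂ Φ₂⁻¹) )`
with `𝒥̲ᵢ = 𝒥₁ᵢ - 𝒥₂ᵢ`; in particular the right-hand side has nonnegative
real part. -/
theorem mazur_identity (U : Set (ℝ × ℝ)) (hU : IsOpen U)
    (hρ : ∀ x ∈ U, 0 < x.1)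
    (Φ₁ Φ₂ : ℝ × ℝ → Matrix (Fin 3) (Fin 3) ℂ)
    (hC₁ : ContDiffOn ℝ 2 Φ₁ U) (hC₂ : ContDiffOn ℝ 2 Φ₂ U)
    (hpos₁ : ∀ x ∈ U, (Φ₁ x).PosDef) (hpos₂ : ∀ x ∈ U, (Φ₂ x).PosDef)
    (hdiv₁ : ∀ x ∈ U,
      pd1 (fun y => (y.1 : ℂ) • ((Φ₁ y)⁻¹ * pd1 Φ₁ y)) x
        + pd2 (fun y => (y.1 : ℂ) • ((Φ₁ y)⁻¹ * pd2 Φ₁ y)) x = 0)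
    (hdiv₂ : ∀ x ∈ U,
      pd1 (fun y => (y.1 : ℂ) • ((Φ₂ y)⁻¹ * pd1 Φ₂ y)) x
        + pd2 (fun y => (y.1 : ℂ) • ((Φ₂ y)⁻¹ * pd2 Φ₂ y)) x = 0) :
    ∀ x ∈ U,
      let J₁ : Matrix (Fin 3) (Fin 3) ℂ :=
        (Φ₁ x)⁻¹ * pd1 Φ₁ x - (Φ₂ x)⁻¹ * pd1 Φ₂ x
      let J₂ : Matrix (Fin 3) (Fin 3) ℂ :=
        (Φ₁ x)⁻¹ * pd2 Φ₁ x - (Φ₂ x)⁻¹ * pd2 Φ₂ x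
      let R : ℂ := (x.1 : ℂ) *
        ((J₁ᴴ * Φ₁ x * J₁ * (Φ₂ x)⁻¹).trace + (J₂ᴴ * Φ₁ x * J₂ * (Φ₂ x)⁻¹).trace)
      (pd1 (fun y => (y.1 : ℂ) * pd1 (fun z => (Φ₁ z * (Φ₂ z)⁻¹).trace) y) x
        + pd2 (fun y => (y.1 : ℂ) * pd2 (fun z => (Φ₁ z * (Φ₂ z)⁻¹).trace) y) x = R)
      ∧ 0 ≤ R.re := by
  intro x hx
  have hmem : U ∈ nhds x := hU.mem_nhds hx
  have key : ∀ (Φ : ℝ × ℝ → MM), ContDiffOn ℝ 2 Φ U → (∀ y ∈ U, (Φ y).PosDef) →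
      ∀ y ∈ U, DifferentiableAt ℝ Φ y ∧ (Φ y).det ≠ 0
        ∧ DifferentiableAt ℝ (fun z => (Φ z)⁻¹) y
        ∧ ∀ v : ℝ × ℝ, DifferentiableAt ℝ (fun z => fderiv ℝ Φ z v) y := by
    intro Φ hC hpos y hy
    have hΦ : DifferentiableAt ℝ Φ y :=
      (hC.contDiffAt (hU.mem_nhds hy)).differentiableAt two_ne_zero
    have hdet : (Φ y).det ≠ 0 := (hpos y hy).det_pos.ne'
    refine ⟨hΦ, hdet, differentiableAt_matinv hΦ hdet, fun v => ?_⟩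
    have hfd := hC.fderiv_of_isOpen hU (m := 1) (by norm_num)
    exact ((hfd.contDiffAt (hU.mem_nhds hy)).clm_apply contDiffAt_const).differentiableAt one_ne_zero
  obtain ⟨hΦ1x, hdet1x, hΨ1x, hpd1x⟩ := key Φ₁ hC₁ hpos₁ x hx
  obtain ⟨hΦ2x, hdet2x, hΨ2x, hpd2x⟩ := key Φ₂ hC₂ hpos₂ x hx
  have hcx : DifferentiableAt ℝ (fun y : ℝ × ℝ => (y.1 : ℂ)) x :=
    (Complex.ofRealCLM.differentiable.comp differentiable_fst).differentiableAt
  have hK : ∀ (Φ : ℝ × ℝ → MM), ContDiffOn ℝ 2 Φ U → (∀ y ∈ U, (Φ y).PosDef) → ∀ v : ℝ × ℝ,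
      DifferentiableAt ℝ (fun y => (y.1 : ℂ) • ((Φ y)⁻¹ * fderiv ℝ Φ y v)) x := by
    intro Φ hC hpos v
    obtain ⟨hΦ, hdet, hΨ, hpd⟩ := key Φ hC hpos x hx
    exact hcx.smul (differentiableAt_matmul hΨ (hpd v))
  -- hermiticity of values and derivatives
  have herm : ∀ (Φ : ℝ × ℝ → MM), DifferentiableAt ℝ Φ x → (∀ y ∈ U, (Φ y).PosDef) →
      ∀ v : ℝ × ℝ, (fderiv ℝ Φ x v)ᴴ = fderiv ℝ Φ x v := by
    intro Φ hΦ hpos v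
    have hev : (fun y => (Φ y)ᴴ) =ᶠ[nhds x] Φ := by
      filter_upwards [hmem] with y hy
      exact (hpos y hy).1
    calc (fderiv ℝ Φ x v)ᴴ = fderiv ℝ (fun y => (Φ y)ᴴ) x v := (fderiv_ct hΦ v).symm
      _ = fderiv ℝ Φ x v := by rw [hev.fderiv_eq]
  -- outer derivative formula
  have outer : ∀ v : ℝ × ℝ,
      fderiv ℝ (fun y => (y.1 : ℂ) * fderiv ℝ (fun z => (Φ₁ z * (Φ₂ z)⁻¹).trace) y v) x v
      = (fderiv ℝ Φ₁ x v * ((x.1 : ℂ) • ((Φ₁ x)⁻¹ * fderiv ℝ Φ₁ x v)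
            - (x.1 : ℂ) • ((Φ₂ x)⁻¹ * fderiv ℝ Φ₂ x v)) * (Φ₂ x)⁻¹).trace
        + (Φ₁ x * (fderiv ℝ (fun y => (y.1 : ℂ) • ((Φ₁ y)⁻¹ * fderiv ℝ Φ₁ y v)) x v
            - fderiv ℝ (fun y => (y.1 : ℂ) • ((Φ₂ y)⁻¹ * fderiv ℝ Φ₂ y v)) x v) * (Φ₂ x)⁻¹).trace
        + (Φ₁ x * ((x.1 : ℂ) • ((Φ₁ x)⁻¹ * fderiv ℝ Φ₁ x v)
            - (x.1 : ℂ) • ((Φ₂ x)⁻¹ * fderiv ℝ Φ₂ x v))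
            * -((Φ₂ x)⁻¹ * fderiv ℝ Φ₂ x v * (Φ₂ x)⁻¹)).trace := by
    intro v
    have hEq : (fun y => (y.1 : ℂ) * fderiv ℝ (fun z => (Φ₁ z * (Φ₂ z)⁻¹).trace) y v)
        =ᶠ[nhds x] (fun y => (Φ₁ y * ((y.1 : ℂ) • ((Φ₁ y)⁻¹ * fderiv ℝ Φ₁ y v)
            - (y.1 : ℂ) • ((Φ₂ y)⁻¹ * fderiv ℝ Φ₂ y v)) * (Φ₂ y)⁻¹).trace) := by
      filter_upwards [hmem] with y hy
      obtain ⟨h1, hd1, -, -⟩ := key Φ₁ hC₁ hpos₁ y hy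
      obtain ⟨h2, hd2, -, -⟩ := key Φ₂ hC₂ hpos₂ y hy
      exact inner_eq h1 h2 hd1 hd2 v (y.1 : ℂ)
    rw [hEq.fderiv_eq]
    have hg : DifferentiableAt ℝ (fun y => (y.1 : ℂ) • ((Φ₁ y)⁻¹ * fderiv ℝ Φ₁ y v)
        - (y.1 : ℂ) • ((Φ₂ y)⁻¹ * fderiv ℝ Φ₂ y v)) x :=
      (hK Φ₁ hC₁ hpos₁ v).sub (hK Φ₂ hC₂ hpos₂ v)
    erw [fderiv_trace_mul3 hΦ1x hg hΨ2x v,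
      fderiv_fun_sub (hK Φ₁ hC₁ hpos₁ v) (hK Φ₂ hC₂ hpos₂ v),
      fderiv_matinv hΦ2x hdet2x v]
    rfl
  have houter1 := outer (1, 0)
  have houter2 := outer (0, 1)
  -- divergence conditions
  have hdiv₁' : fderiv ℝ (fun y => (y.1 : ℂ) • ((Φ₁ y)⁻¹ * fderiv ℝ Φ₁ y (1, 0))) x (1, 0)
      + fderiv ℝ (fun y => (y.1 : ℂ) • ((Φ₁ y)⁻¹ * fderiv ℝ Φ₁ y (0, 1))) x (0, 1) = 0 :=
    hdiv₁ x hx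
  have hdiv₂' : fderiv ℝ (fun y => (y.1 : ℂ) • ((Φ₂ y)⁻¹ * fderiv ℝ Φ₂ y (1, 0))) x (1, 0)
      + fderiv ℝ (fun y => (y.1 : ℂ) • ((Φ₂ y)⁻¹ * fderiv ℝ Φ₂ y (0, 1))) x (0, 1) = 0 :=
    hdiv₂ x hx
  have hGsum : (fderiv ℝ (fun y => (y.1 : ℂ) • ((Φ₁ y)⁻¹ * fderiv ℝ Φ₁ y (1, 0))) x (1, 0)
        - fderiv ℝ (fun y => (y.1 : ℂ) • ((Φ₂ y)⁻¹ * fderiv ℝ Φ₂ y (1, 0))) x (1, 0))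
      + (fderiv ℝ (fun y => (y.1 : ℂ) • ((Φ₁ y)⁻¹ * fderiv ℝ Φ₁ y (0, 1))) x (0, 1)
        - fderiv ℝ (fun y => (y.1 : ℂ) • ((Φ₂ y)⁻¹ * fderiv ℝ Φ₂ y (0, 1))) x (0, 1)) = 0 := by
    rw [sub_add_sub_comm, hdiv₁', hdiv₂', sub_zero]
  have hBsum : (Φ₁ x * (fderiv ℝ (fun y => (y.1 : ℂ) • ((Φ₁ y)⁻¹ * fderiv ℝ Φ₁ y (1, 0))) x (1, 0)
        - fderiv ℝ (fun y => (y.1 : ℂ) • ((Φ₂ y)⁻¹ * fderiv ℝ Φ₂ y (1, 0))) x (1, 0))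
        * (Φ₂ x)⁻¹).trace
      + (Φ₁ x * (fderiv ℝ (fun y => (y.1 : ℂ) • ((Φ₁ y)⁻¹ * fderiv ℝ Φ₁ y (0, 1))) x (0, 1)
        - fderiv ℝ (fun y => (y.1 : ℂ) • ((Φ₂ y)⁻¹ * fderiv ℝ Φ₂ y (0, 1))) x (0, 1))
        * (Φ₂ x)⁻¹).trace = 0 := by
    rw [← Matrix.trace_add, ← Matrix.add_mul, ← Matrix.mul_add, hGsum,
      Matrix.mul_zero, Matrix.zero_mul, Matrix.trace_zero]
  -- point identities
  have hP : (Φ₁ x)ᴴ = Φ₁ x := (hpos₁ x hx).1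
  have hS : (Φ₂ x)ᴴ = Φ₂ x := (hpos₂ x hx).1
  have point1 := point_identity' (x.1 : ℂ) (Φ₁ x) (Φ₂ x)
    (fderiv ℝ Φ₁ x (1, 0)) (fderiv ℝ Φ₂ x (1, 0)) hP hS
    (herm Φ₁ hΦ1x hpos₁ (1, 0)) (herm Φ₂ hΦ2x hpos₂ (1, 0)) hdet1x hdet2x
  have point2 := point_identity' (x.1 : ℂ) (Φ₁ x) (Φ₂ x)
    (fderiv ℝ Φ₁ x (0, 1)) (fderiv ℝ Φ₂ x (0, 1)) hP hS
    (herm Φ₁ hΦ1x hpos₁ (0, 1)) (herm Φ₂ hΦ2x hpos₂ (0, 1)) hdet1x hdet2x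
  -- nonnegativity
  have psd2 : ((Φ₂ x)⁻¹).PosSemidef := ((hpos₂ x hx).inv).posSemidef
  have tnonneg : ∀ v : ℝ × ℝ,
      0 ≤ ((((Φ₁ x)⁻¹ * fderiv ℝ Φ₁ x v - (Φ₂ x)⁻¹ * fderiv ℝ Φ₂ x v)ᴴ * Φ₁ x
          * ((Φ₁ x)⁻¹ * fderiv ℝ Φ₁ x v - (Φ₂ x)⁻¹ * fderiv ℝ Φ₂ x v)) * (Φ₂ x)⁻¹).trace := by
    intro v
    exact trace_mul_psd_nonneg
      ((hpos₁ x hx).posSemidef.conjTranspose_mul_mul_same _) psd2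
  have hsum_nonneg :
      0 ≤ (((Φ₁ x)⁻¹ * fderiv ℝ Φ₁ x (1, 0) - (Φ₂ x)⁻¹ * fderiv ℝ Φ₂ x (1, 0))ᴴ * Φ₁ x
            * ((Φ₁ x)⁻¹ * fderiv ℝ Φ₁ x (1, 0) - (Φ₂ x)⁻¹ * fderiv ℝ Φ₂ x (1, 0))
            * (Φ₂ x)⁻¹).trace
        + (((Φ₁ x)⁻¹ * fderiv ℝ Φ₁ x (0, 1) - (Φ₂ x)⁻¹ * fderiv ℝ Φ₂ x (0, 1))ᴴ * Φ₁ x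
            * ((Φ₁ x)⁻¹ * fderiv ℝ Φ₁ x (0, 1) - (Φ₂ x)⁻¹ * fderiv ℝ Φ₂ x (0, 1))
            * (Φ₂ x)⁻¹).trace := by
    have t1 := tnonneg (1, 0)
    have t2 := tnonneg (0, 1)
    calc (0 : ℂ) = 0 + 0 := by ring
      _ ≤ _ := add_le_add t1 t2
  constructor
  · show fderiv ℝ (fun y => (y.1 : ℂ)
        * fderiv ℝ (fun z => (Φ₁ z * (Φ₂ z)⁻¹).trace) y (1, 0)) x (1, 0)
      + fderiv ℝ (fun y => (y.1 : ℂ)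
        * fderiv ℝ (fun z => (Φ₁ z * (Φ₂ z)⁻¹).trace) y (0, 1)) x (0, 1) = _
    rw [houter1, houter2]
    simp only [pd1, pd2]
    linear_combination (norm := skip) point1 + point2 + hBsum
    ring_nf
    rw [sub_sub, sub_eq_zero]
    rfl
  · show (0 : ℝ) ≤ ((x.1 : ℂ) *
        ((((Φ₁ x)⁻¹ * fderiv ℝ Φ₁ x (1, 0) - (Φ₂ x)⁻¹ * fderiv ℝ Φ₂ x (1, 0))ᴴ * Φ₁ x
            * ((Φ₁ x)⁻¹ * fderiv ℝ Φ₁ x (1, 0) - (Φ₂ x)⁻¹ * fderiv ℝ Φ₂ x (1, 0))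
            * (Φ₂ x)⁻¹).trace
          + (((Φ₁ x)⁻¹ * fderiv ℝ Φ₁ x (0, 1) - (Φ₂ x)⁻¹ * fderiv ℝ Φ₂ x (0, 1))ᴴ * Φ₁ x
            * ((Φ₁ x)⁻¹ * fderiv ℝ Φ₁ x (0, 1) - (Φ₂ x)⁻¹ * fderiv ℝ Φ₂ x (0, 1))
            * (Φ₂ x)⁻¹).trace)).re
    have h0 := hsum_nonneg
    rw [Complex.le_def] at h0
    rw [Complex.mul_re, Complex.ofReal_re, Complex.ofReal_im, zero_mul, sub_zero]
    exact mul_nonneg (hρ x hx).le (by simpa using h0.1)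
end MazurAux
end

section
/- The two expressions for the divergence-free currents 𝒥ᵖ and 𝒥ᵃ agree: (a) (I/(2*N^2)) * ( 2*ℰ*conj(ℰ)*(conj(Λ)*dΛ - Λ*conj(dΛ)) + (ℰ + 2*Λ*conj(Λ))*ℰ*conj(dℰ) - (conj(ℰ) + 2*Λ*conj(Λ))*conj(ℰ)*dℰ ) = (1/N^2) * ( (N^2 - Ω^2 - (Λ*conj(Λ))^2)*w - 2*N*Ω*dN - 2*( z + conj(z) ) ) where z := (Ω - I*(N + Λ*conj(Λ)))*N*conj(Λ)*dΛ (so that 2*(z + conj(z)) = 4*Re(z)), and (b) (1/(2*N^2)) * ( ℰ*(ℰ + conj(ℰ))*conj(dΛ) + 2*conj(Λ)^2*(ℰ*dΛ - Λ*dℰ) - conj(Λ)*(dℰ*conj(ℰ) + ℰ*conj(dℰ)) ) = (1/N^2) * ( N^2*conj(dΛ) - N*conj(Λ)*dN - 2*N*conj(Λ)^2*dΛ - (Ω + I*Λ*conj(Λ))*(conj(Λ)*w + I*N*conj(dΛ)) ). -/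
open Complex ComplexConjugate

/-- The two expressions for the divergence-free currents `𝒥ᵖ` and `𝒥ᵃ` agree:
(a) `(i/(2N²)) ( 2 ℰ conj(ℰ)(conj(Λ)dΛ - Λ conj(dΛ)) + (ℰ + 2Λconj Λ) ℰ conj(dℰ)
      - (conj ℰ + 2Λ conj Λ) conj(ℰ) dℰ )
     = (1/N²) ( (N² - Ω² - (Λ conj Λ)²) w - 2NΩ dN - 2(z + conj z) )`
with `z = (Ω - i(N + Λ conj Λ)) N conj(Λ) dΛ`, and
(b) `(1/(2N²)) ( ℰ (ℰ + conj ℰ) conj(dΛ) + 2 conj(Λ)² (ℰ dΛ - Λ dℰ)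
      - conj(Λ) d(ℰ conj ℰ) )
     = (1/N²) ( N² conj(dΛ) - N conj(Λ) dN - 2N conj(Λ)² dΛ
      - (Ω + i Λ conj Λ)(conj(Λ) w + i N conj(dΛ)) )`. -/
theorem currents_p_a_agree (ℰ Λ dℰ dΛ N Ω dN dΩ w z : ℂ)
    (hN : N = -(ℰ + conj ℰ + 2 * Λ * conj Λ) / 2) (hN0 : N ≠ 0)
    (hΩ : Ω = (ℰ - conj ℰ) / (2 * I))
    (hdN : dN = -(dℰ + conj dℰ) / 2 - Λ * conj dΛ - conj Λ * dΛ)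
    (hdΩ : dΩ = (dℰ - conj dℰ) / (2 * I))
    (hw : w = dΩ + I * (Λ * conj dΛ - conj Λ * dΛ))
    (hz : z = (Ω - I * (N + Λ * conj Λ)) * N * conj Λ * dΛ) :
    ((I / (2 * N ^ 2)) *
        (2 * ℰ * conj ℰ * (conj Λ * dΛ - Λ * conj dΛ)
          + (ℰ + 2 * Λ * conj Λ) * ℰ * conj dℰ
          - (conj ℰ + 2 * Λ * conj Λ) * conj ℰ * dℰ)
      = (1 / N ^ 2) *
        ((N ^ 2 - Ω ^ 2 - (Λ * conj Λ) ^ 2) * w - 2 * N * Ω * dN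
          - 2 * (z + conj z))) ∧
    ((1 / (2 * N ^ 2)) *
        (ℰ * (ℰ + conj ℰ) * conj dΛ + 2 * (conj Λ) ^ 2 * (ℰ * dΛ - Λ * dℰ)
          - conj Λ * (dℰ * conj ℰ + ℰ * conj dℰ))
      = (1 / N ^ 2) *
        (N ^ 2 * conj dΛ - N * conj Λ * dN - 2 * N * (conj Λ) ^ 2 * dΛ
          - (Ω + I * Λ * conj Λ) * (conj Λ * w + I * N * conj dΛ))) := by
  have hNr : conj N = N := by
    rw [hN]; simp only [map_div₀, map_neg, map_add, map_mul, conj_conj, map_ofNat]; ring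
  have hΩr : conj Ω = Ω := by
    rw [hΩ]; simp only [map_div₀, map_sub, map_mul, conj_conj, conj_I, map_ofNat]
    rw [div_eq_div_iff (by simp [I_ne_zero]) (by simp [I_ne_zero])]; ring
  have hN' : ℰ + conj ℰ = -2 * N - 2 * Λ * conj Λ := by linear_combination 2 * hN
  have hΩ' : ℰ - conj ℰ = 2 * I * Ω := by rw [hΩ]; field_simp
  have hdN' : dℰ + conj dℰ = -2 * dN - 2 * Λ * conj dΛ - 2 * conj Λ * dΛ := by
    linear_combination 2 * hdN
  have hdΩ' : dℰ - conj dℰ = 2 * I * dΩ := by rw [hdΩ]; field_simp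
  have hE : ℰ = -N - Λ * conj Λ + I * Ω := by linear_combination (hN' + hΩ') / 2
  have hEc : conj ℰ = -N - Λ * conj Λ - I * Ω := by linear_combination (hN' - hΩ') / 2
  have hdE : dℰ = -dN - Λ * conj dΛ - conj Λ * dΛ + I * dΩ := by
    linear_combination (hdN' + hdΩ') / 2
  have hdEc : conj dℰ = -dN - Λ * conj dΛ - conj Λ * dΛ - I * dΩ := by
    linear_combination (hdN' - hdΩ') / 2
  have hzc : conj z = (Ω + I * (N + Λ * conj Λ)) * N * Λ * conj dΛ := by
    rw [hz]; simp only [map_mul, map_sub, map_add, conj_I, conj_conj, hNr, hΩr]; ring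
  rw [hzc, hz, hEc, hE, hdEc, hdE, hw]
  constructor <;>
  · field_simp
    ring_nf
    simp only [Complex.I_sq,
      show Complex.I ^ 3 = -Complex.I by rw [pow_succ, Complex.I_sq]; ring,
      show Complex.I ^ 4 = 1 by rw [show (4 : ℕ) = 2 + 2 from rfl, pow_add, Complex.I_sq]; ring]
    ring
end
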